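/- arXiv:1903.00950 — 5 statements merged into one kernel-verified Lean document; each statement's English description precedes it below -/
import Mathlib

section
/- Consider a continuous game with N players, strategy sets S_i ⊆ ℝ^d with S_i ⊆ ℝ^d_+, joint strategy space S = ∏_{i=1}^N S_i, payoffs π_i : S → ℝ, and social function γ : ℝ^{Nd}_+ → ℝ with γ(0) = 0. Suppose: (i) γ is monotone and DR-submodular on ℝ^{Nd}_+; (ii) for every player i and every outcome s ∈ S, π_i(s) ≥ γ(s) − γ(0, s_{-i}); and (curvature bound, for some α ∈ ℝ) for all s, s' ∈ S, γ(s + s') − γ(s') ≥ (1 − α) γ(s). Then the game is (1, α)-smooth: for all outcomes s, s⋆ ∈ S, ∑_{i=1}^N π_i(s⋆_i, s_{-i}) ≥ γ(s⋆) − α γ(s). -/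
/-- `f` is monotone on `X`: `f x ≤ f y` whenever `x ≤ y` in `X`. -/
def MonotoneOnSet {ι : Type*} (X : Set (ι → ℝ)) (f : (ι → ℝ) → ℝ) : Prop :=
  ∀ ⦃x⦄, x ∈ X → ∀ ⦃y⦄, y ∈ X → x ≤ y → f x ≤ f y

/-- `f` is DR-submodular on `X`. -/
def DRSubmodularOn {ι : Type*} [DecidableEq ι] (X : Set (ι → ℝ)) (f : (ι → ℝ) → ℝ) : Prop :=
  ∀ ⦃x y : ι → ℝ⦄, x ∈ X → y ∈ X → x ≤ y →
    ∀ i : ι, ∀ k : ℝ, 0 ≤ k →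
      x + Pi.single i k ∈ X → y + Pi.single i k ∈ X →
        f (x + Pi.single i k) - f x ≥ f (y + Pi.single i k) - f y

/-- Replace player `i`'s block of the joint strategy `s` by `v`, i.e. the outcome
`(v, s₋ᵢ)`. -/
def upd {N d : ℕ} (s : Fin N × Fin d → ℝ) (i : Fin N) (v : Fin d → ℝ) :
    Fin N × Fin d → ℝ :=
  fun q => if q.1 = i then v q.2 else s q

/-- The joint strategy space `S = ∏ᵢ Sᵢ`, viewed inside `ℝ^{Nd}`. -/
def joint {N d : ℕ} (S : Fin N → Set (Fin d → ℝ)) : Set (Fin N × Fin d → ℝ) :=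
  {s | ∀ i : Fin N, (fun r => s (i, r)) ∈ S i}

/-!
Walk from `s` to `s + s⋆` by adding the players' blocks of `s⋆` one at a time. By
DR-submodularity the gain of adding player `i`'s block to the current point is at most the gain of
adding it to the smaller point `(0, s₋ᵢ)`, which is `γ(s⋆ᵢ, s₋ᵢ) - γ(0, s₋ᵢ) ≤ πᵢ(s⋆ᵢ, s₋ᵢ)`.
Summing, `∑ᵢ πᵢ(s⋆ᵢ, s₋ᵢ) ≥ γ(s + s⋆) - γ(s)`, and the curvature bound applied to `(s, s⋆)`
turns the right-hand side into `γ(s⋆) - α γ(s)`.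
-/

namespace DRSubmodularOn

variable {ι : Type*} [Fintype ι] [DecidableEq ι] {f : (ι → ℝ) → ℝ}

theorem map_add_sub_map_le_of_le (hf : DRSubmodularOn {x : ι → ℝ | 0 ≤ x} f)
    {x y v : ι → ℝ} (hx : 0 ≤ x) (hxy : x ≤ y) (hv : 0 ≤ v) :
    f (y + v) - f y ≤ f (x + v) - f x := by
  have hy : 0 ≤ y := hx.trans hxy
  suffices ∀ T : Finset ι, f (y + ∑ i ∈ T, Pi.single i (v i)) - f y ≤
      f (x + ∑ i ∈ T, Pi.single i (v i)) - f x by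
    simpa only [Finset.univ_sum_single] using this Finset.univ
  intro T
  induction T using Finset.induction_on with
  | empty => simp
  | insert a T ha ih =>
    rw [Finset.sum_insert ha]
    set u := ∑ i ∈ T, Pi.single i (v i)
    have hu : 0 ≤ u := Finset.sum_nonneg fun i _ => Pi.single_nonneg.2 (hv i)
    have hva : 0 ≤ v a := hv a
    have ha' : 0 ≤ (Pi.single a (v a) : ι → ℝ) := Pi.single_nonneg.2 hva
    have step := hf (add_nonneg hx hu) (add_nonneg hy hu) (add_le_add_left hxy u) a (v a) hva
      (add_nonneg (add_nonneg hx hu) ha') (add_nonneg (add_nonneg hy hu) ha')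
    rw [add_comm _ u, ← add_assoc, ← add_assoc]
    linarith

theorem map_add_sum_sub_map_le (hf : DRSubmodularOn {x : ι → ℝ | 0 ≤ x} f)
    {κ : Type*} [DecidableEq κ] {x w : κ → ι → ℝ} {y : ι → ℝ}
    (hx : ∀ i, 0 ≤ x i) (hxy : ∀ i, x i ≤ y) (hw : ∀ i, 0 ≤ w i) (T : Finset κ) :
    f (y + ∑ i ∈ T, w i) - f y ≤ ∑ i ∈ T, (f (x i + w i) - f (x i)) := by
  induction T using Finset.induction_on with
  | empty => simp
  | insert a T ha ih =>
    have hT : x a ≤ y + ∑ i ∈ T, w i :=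
      le_add_of_le_of_nonneg (hxy a) (Finset.sum_nonneg fun i _ => hw i)
    have step := hf.map_add_sub_map_le_of_le (hx a) hT (hw a)
    rw [Finset.sum_insert ha, Finset.sum_insert ha, add_comm (w a), ← add_assoc]
    linarith

end DRSubmodularOn

section upd

variable {N d : ℕ}

theorem upd_upd_self (s : Fin N × Fin d → ℝ) (i : Fin N) (v w : Fin d → ℝ) :
    upd (upd s i v) i w = upd s i w := by
  funext q
  by_cases h : q.1 = i <;> simp [upd, h]

theorem upd_zero_add_upd_zero (s : Fin N × Fin d → ℝ) (i : Fin N) (v : Fin d → ℝ) :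
    upd s i 0 + upd 0 i v = upd s i v := by
  funext q
  by_cases h : q.1 = i <;> simp [upd, h]

theorem sum_upd_zero_block (s : Fin N × Fin d → ℝ) :
    ∑ i, upd 0 i (fun r => s (i, r)) = s := by
  funext q
  simp [upd, Finset.sum_apply]

theorem upd_nonneg {s : Fin N × Fin d → ℝ} {v : Fin d → ℝ} (hs : 0 ≤ s) (hv : 0 ≤ v)
    (i : Fin N) : 0 ≤ upd s i v := by
  intro q
  by_cases h : q.1 = i
  · simpa [upd, h] using hv q.2
  · simpa [upd, h] using hs q

theorem upd_zero_le {s : Fin N × Fin d → ℝ} (hs : 0 ≤ s) (i : Fin N) : upd s i 0 ≤ s := by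
  intro q
  by_cases h : q.1 = i
  · simpa [upd, h] using hs q
  · simp [upd, h]

theorem upd_mem_joint {S : Fin N → Set (Fin d → ℝ)} {s : Fin N × Fin d → ℝ}
    (hs : s ∈ joint S) (i : Fin N) {v : Fin d → ℝ} (hv : v ∈ S i) : upd s i v ∈ joint S := by
  intro j
  by_cases h : j = i
  · subst h; simpa [upd] using hv
  · simpa [upd, h] using hs j

theorem nonneg_of_mem_joint {S : Fin N → Set (Fin d → ℝ)} (hS : ∀ i, ∀ v ∈ S i, 0 ≤ v)
    {s : Fin N × Fin d → ℝ} (hs : s ∈ joint S) : 0 ≤ s :=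
  fun q => hS q.1 _ (hs q.1) q.2

end upd

theorem valid_utility_game_smooth_general {N d : ℕ}
    (S : Fin N → Set (Fin d → ℝ)) (hS : ∀ i, ∀ v ∈ S i, 0 ≤ v)
    (π : Fin N → (Fin N × Fin d → ℝ) → ℝ)
    (γ : (Fin N × Fin d → ℝ) → ℝ)
    (hDR : DRSubmodularOn {x : Fin N × Fin d → ℝ | 0 ≤ x} γ)
    (hpayoff : ∀ i : Fin N, ∀ s ∈ joint S, π i s ≥ γ s - γ (upd s i 0))
    (α : ℝ)
    (hcurv : ∀ s ∈ joint S, ∀ s' ∈ joint S, γ (s + s') - γ s' ≥ (1 - α) * γ s) :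
    ∀ s ∈ joint S, ∀ sstar ∈ joint S,
      ∑ i : Fin N, π i (upd s i (fun r => sstar (i, r))) ≥ γ sstar - α * γ s := by
  intro s hs sstar hstar
  have hs0 := nonneg_of_mem_joint hS hs
  have hstar0 := nonneg_of_mem_joint hS hstar
  have hgain := hDR.map_add_sum_sub_map_le (y := s) (x := fun i => upd s i 0)
    (w := fun i => upd 0 i (fun r => sstar (i, r)))
    (fun i => upd_nonneg hs0 le_rfl i) (upd_zero_le hs0)
    (fun i => upd_nonneg le_rfl (fun r => hstar0 (i, r)) i) Finset.univ
  simp only [sum_upd_zero_block, upd_zero_add_upd_zero] at hgain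
  have hpay : ∀ i, γ (upd s i (fun r => sstar (i, r))) - γ (upd s i 0) ≤
      π i (upd s i (fun r => sstar (i, r))) := fun i => by
    simpa [upd_upd_self] using hpayoff i _ (upd_mem_joint hs i (hstar i))
  have := Finset.sum_le_sum fun i (_ : i ∈ Finset.univ) => hpay i
  linarith [hcurv s hs sstar hstar]

/-- Smoothness of valid utility games with continuous strategies: under monotonicity and
DR-submodularity of the social function `γ`, the payoff condition (ii), and the curvature
bound with parameter `α`, the game is `(1, α)`-smooth. -/
theorem valid_utility_game_smooth {N d : ℕ}
    (S : Fin N → Set (Fin d → ℝ)) (hS : ∀ i, ∀ v ∈ S i, 0 ≤ v)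
    (π : Fin N → (Fin N × Fin d → ℝ) → ℝ)
    (γ : (Fin N × Fin d → ℝ) → ℝ) (hγ0 : γ 0 = 0)
    (hmono : MonotoneOnSet {x : Fin N × Fin d → ℝ | 0 ≤ x} γ)
    (hDR : DRSubmodularOn {x : Fin N × Fin d → ℝ | 0 ≤ x} γ)
    (hpayoff : ∀ i : Fin N, ∀ s ∈ joint S, π i s ≥ γ s - γ (upd s i 0))
    (α : ℝ)
    (hcurv : ∀ s ∈ joint S, ∀ s' ∈ joint S, γ (s + s') - γ s' ≥ (1 - α) * γ s) :
    ∀ s ∈ joint S, ∀ sstar ∈ joint S,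
      ∑ i : Fin N, π i (upd s i (fun r => sstar (i, r))) ≥ γ sstar - α * γ s :=
  valid_utility_game_smooth_general S hS π γ hDR hpayoff α hcurv
end

section
/- (Theorem 1.) Consider a continuous game with N players, strategy sets S_i ⊆ ℝ^d_+, joint strategy space S = ∏_{i=1}^N S_i, payoffs π_i : S → ℝ, and social function γ : ℝ^{Nd}_+ → ℝ_+ with γ(0) = 0. Suppose: (i) γ is monotone and DR-submodular; (ii) π_i(s) ≥ γ(s) − γ(0, s_{-i}) for every player i and every s ∈ S; (iii) γ(s) ≥ ∑_{i=1}^N π_i(s) for every s ∈ S; and (curvature bound, for some α ∈ [0,1]) γ(s + s') − γ(s') ≥ (1 − α) γ(s) for all s, s' ∈ S. Let σ be a coarse correlated equilibrium of the game, with γ, each π_i, and each s ↦ π_i(s'_i, s_{-i}) integrable with respect to σ. Then for every s⋆ ∈ S, (1 + α) · ∫ γ(s) dσ(s) ≥ γ(s⋆); in particular the robust price of anarchy is at most 1 + α. -/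
open MeasureTheory

/-- Block version of DR-submodularity on the nonnegative orthant. -/
lemma blockDR {ι : Type*} [DecidableEq ι] [Fintype ι]
    (f : (ι → ℝ) → ℝ)
    (hDR : DRSubmodularOn {x : ι → ℝ | 0 ≤ x} f)
    {x y w : ι → ℝ} (hx : 0 ≤ x) (hxy : x ≤ y) (hw : 0 ≤ w) :
    f (x + w) - f x ≥ f (y + w) - f y := by
  have hy : 0 ≤ y := le_trans hx hxy
  have key : ∀ T : Finset ι,
      f (x + fun q => if q ∈ T then w q else 0) - f x ≥
      f (y + fun q => if q ∈ T then w q else 0) - f y := by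
    intro T
    induction T using Finset.induction_on with
    | empty =>
      simp [show (fun _ : ι => (0:ℝ)) = 0 from rfl]
    | @insert a T ha ih =>
      have hsplit : (fun q => if q ∈ insert a T then w q else 0) =
          (fun q => if q ∈ T then w q else 0) + Pi.single a (w a) := by
        funext q
        by_cases hq : q = a
        · subst hq
          simp [ha]
        · simp [Pi.single_apply, hq, Finset.mem_insert]
      set wT : ι → ℝ := fun q => if q ∈ T then w q else 0 with hwT
      have hwTnn : 0 ≤ wT := by
        intro q
        simp only [hwT]
        split
        · exact hw q
        · exact le_rfl
      have h1 : (0:ι → ℝ) ≤ x + wT := le_trans hx (by intro q; simpa using hwTnn q)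
      have h2 : (0:ι → ℝ) ≤ y + wT := le_trans hy (by intro q; simpa using hwTnn q)
      have hle : x + wT ≤ y + wT := fun q => by
        simpa using add_le_add_right (hxy q) (wT q)
      have hstep := hDR h1 h2 hle a (w a) (hw a)
        (by intro q; by_cases hq : q = a
            · subst hq; simpa [Pi.single_apply] using add_nonneg (h1 q) (hw q)
            · simpa [Pi.single_apply, hq] using h1 q)
        (by intro q; by_cases hq : q = a
            · subst hq; simpa [Pi.single_apply] using add_nonneg (h2 q) (hw q)
            · simpa [Pi.single_apply, hq] using h2 q)
      rw [hsplit]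
      have ex : x + (wT + Pi.single a (w a)) = x + wT + Pi.single a (w a) := by ring
      have ey : y + (wT + Pi.single a (w a)) = y + wT + Pi.single a (w a) := by ring
      rw [ex, ey]
      linarith [ih, hstep]
  have := key Finset.univ
  simpa using this

/-- Theorem 1: in a valid utility game with continuous strategies whose social function has
curvature at most `α`, every coarse correlated equilibrium `σ` satisfies
`(1 + α) · 𝔼_{s∼σ}[γ(s)] ≥ γ(s⋆)` for every outcome `s⋆`; i.e. the robust price of anarchy
is at most `1 + α`. -/
theorem poa_cce_le_one_add_curvature {N d : ℕ}
    (S : Fin N → Set (Fin d → ℝ)) (hS : ∀ i, ∀ v ∈ S i, 0 ≤ v)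
    (π : Fin N → (Fin N × Fin d → ℝ) → ℝ)
    (γ : (Fin N × Fin d → ℝ) → ℝ) (hγ0 : γ 0 = 0)
    (hγnn : ∀ x : Fin N × Fin d → ℝ, 0 ≤ x → 0 ≤ γ x)
    (hmono : MonotoneOnSet {x : Fin N × Fin d → ℝ | 0 ≤ x} γ)
    (hDR : DRSubmodularOn {x : Fin N × Fin d → ℝ | 0 ≤ x} γ)
    (hpayoff : ∀ i : Fin N, ∀ s ∈ joint S, π i s ≥ γ s - γ (upd s i 0))
    (hsum : ∀ s ∈ joint S, γ s ≥ ∑ i : Fin N, π i s)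
    (α : ℝ) (hα0 : 0 ≤ α) (hα1 : α ≤ 1)
    (hcurv : ∀ s ∈ joint S, ∀ s' ∈ joint S, γ (s + s') - γ s' ≥ (1 - α) * γ s)
    (σ : Measure (Fin N × Fin d → ℝ)) [IsProbabilityMeasure σ]
    (hsupp : ∀ᵐ s ∂σ, s ∈ joint S)
    (hCCE : ∀ i : Fin N, ∀ v ∈ S i,
      (∫ s, π i s ∂σ) ≥ ∫ s, π i (upd s i v) ∂σ)
    (hint_γ : Integrable γ σ)
    (hint_π : ∀ i : Fin N, Integrable (π i) σ)
    (hint_dev : ∀ i : Fin N, ∀ v ∈ S i, Integrable (fun s => π i (upd s i v)) σ) :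
    ∀ sstar ∈ joint S, (1 + α) * (∫ s, γ s ∂σ) ≥ γ sstar := by
  intro sstar hstar
  -- nonnegativity of joint strategies
  have hjnn : ∀ s ∈ joint S, (0:Fin N × Fin d → ℝ) ≤ s := by
    intro s hs q
    exact hS q.1 _ (hs q.1) q.2
  have hstarnn := hjnn sstar hstar
  -- deviation strategies
  set v : Fin N → Fin d → ℝ := fun i r => sstar (i, r) with hv
  have hvS : ∀ i, v i ∈ S i := fun i => hstar i
  -- key pointwise inequality
  have key : ∀ s ∈ joint S,
      (∑ i : Fin N, π i (upd s i (v i))) ≥ γ sstar - α * γ s := by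
    intro s hs
    have hsnn := hjnn s hs
    -- hybrid points
    set g : ℕ → (Fin N × Fin d → ℝ) :=
      fun k q => s q + (if (q.1 : ℕ) < k then sstar q else 0) with hg
    have hgN : g N = s + sstar := by
      funext q; simp [hg, q.1.isLt]
    have hg0 : g 0 = s := by
      funext q; simp [hg]
    have step : ∀ i : Fin N,
        π i (upd s i (v i)) ≥ γ (g ((i:ℕ)+1)) - γ (g (i:ℕ)) := by
      intro i
      have hmem : upd s i (v i) ∈ joint S := by
        intro j
        by_cases hj : j = i
        · subst hj; simpa [upd] using hvS j
        · simpa [upd, hj] using hs j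
      have hupd0 : upd (upd s i (v i)) i 0 = upd s i 0 := by
        funext q
        by_cases hq : q.1 = i <;> simp [upd, hq]
      have h1 : π i (upd s i (v i)) ≥ γ (upd s i (v i)) - γ (upd s i 0) := by
        have := hpayoff i _ hmem
        rwa [hupd0] at this
      -- block vector for player i
      set w : Fin N × Fin d → ℝ := fun q => if q.1 = i then sstar q else 0 with hw
      have hwnn : (0:Fin N × Fin d → ℝ) ≤ w := by
        intro q
        simp only [hw]
        split
        · exact hstarnn q
        · exact le_rfl
      have e1 : upd s i (v i) = upd s i 0 + w := by
        funext q
        obtain ⟨a, b⟩ := q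
        by_cases hq : a = i
        · subst hq; simp [upd, hw, hv]
        · simp [upd, hw, hq]
      have e2 : g ((i:ℕ)+1) = g (i:ℕ) + w := by
        funext q
        obtain ⟨a, b⟩ := q
        simp only [hg, hw, Pi.add_apply]
        by_cases hq : a = i
        · subst hq
          simp [lt_irrefl]
        · have hne : (a:ℕ) ≠ (i:ℕ) := fun h => hq (Fin.val_injective h)
          have : ((a:ℕ) < (i:ℕ)+1) ↔ ((a:ℕ) < (i:ℕ)) := by omega
          simp [hq, this]
      have hxnn : (0:Fin N × Fin d → ℝ) ≤ upd s i 0 := by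
        intro q
        by_cases hq : q.1 = i
        · simp [upd, hq]
        · simpa [upd, hq] using hsnn q
      have hxy : upd s i 0 ≤ g (i:ℕ) := by
        intro q
        have hnn : (0:ℝ) ≤ if ((q.1:ℕ) < (i:ℕ)) then sstar q else 0 := by
          split
          · exact hstarnn q
          · exact le_rfl
        simp only [upd, hg, Pi.zero_apply]
        split
        · exact add_nonneg (hsnn q) hnn
        · linarith [hsnn q]
      have hblock := blockDR γ hDR hxnn hxy hwnn
      rw [← e1, ← e2] at hblock
      linarith
    -- telescope
    have htel : (∑ i : Fin N, (γ (g ((i:ℕ)+1)) - γ (g (i:ℕ)))) = γ (s + sstar) - γ s := by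
      have := Finset.sum_range_sub (fun k => γ (g k)) N
      rw [Fin.sum_univ_eq_sum_range (fun k => γ (g (k+1)) - γ (g k)) N]
      rw [this, hgN, hg0]
    have hsumstep : (∑ i : Fin N, π i (upd s i (v i))) ≥ γ (s + sstar) - γ s := by
      rw [← htel]
      exact Finset.sum_le_sum fun i _ => step i
    have hc := hcurv s hs sstar hstar
    have hγsnn := hγnn s hsnn
    nlinarith [hc, hsumstep]
  -- integral chain
  have hint_sum : Integrable (fun s => ∑ i : Fin N, π i s) σ :=
    integrable_finset_sum _ fun i _ => hint_π i
  have hint_devsum : Integrable (fun s => ∑ i : Fin N, π i (upd s i (v i))) σ :=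
    integrable_finset_sum _ fun i _ => hint_dev i (v i) (hvS i)
  have I1 : (∫ s, γ s ∂σ) ≥ ∫ s, (∑ i : Fin N, π i s) ∂σ := by
    refine integral_mono_ae hint_sum hint_γ ?_
    filter_upwards [hsupp] with s hs
    exact hsum s hs
  have I2 : (∫ s, (∑ i : Fin N, π i s) ∂σ) = ∑ i : Fin N, ∫ s, π i s ∂σ :=
    integral_finset_sum _ fun i _ => hint_π i
  have I3 : (∑ i : Fin N, ∫ s, π i s ∂σ) ≥ ∑ i : Fin N, ∫ s, π i (upd s i (v i)) ∂σ :=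
    Finset.sum_le_sum fun i _ => hCCE i (v i) (hvS i)
  have I4 : (∑ i : Fin N, ∫ s, π i (upd s i (v i)) ∂σ) =
      ∫ s, (∑ i : Fin N, π i (upd s i (v i))) ∂σ :=
    (integral_finset_sum _ fun i _ => hint_dev i (v i) (hvS i)).symm
  have I5 : (∫ s, (∑ i : Fin N, π i (upd s i (v i))) ∂σ) ≥
      ∫ s, (γ sstar - α * γ s) ∂σ := by
    refine integral_mono_ae (by exact (integrable_const _).sub (hint_γ.const_mul α)) hint_devsum ?_
    filter_upwards [hsupp] with s hs
    exact key s hs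
  have I6 : (∫ s, (γ sstar - α * γ s) ∂σ) = γ sstar - α * ∫ s, γ s ∂σ := by
    rw [integral_sub (integrable_const _) (hint_γ.const_mul α), integral_const,
      integral_const_mul]
    simp
  linarith [I1, I2 ▸ I1, I3, I4 ▸ I3, I5, I6 ▸ I5]
end

section
/- (Fact 1, key claim.) Let γ : ℝ^{Nd}_+ → ℝ be monotone and DR-submodular. For s ∈ ℝ^{Nd}_+ written in N blocks (s_1, …, s_N) with each s_i ∈ ℝ^d_+, let (0, s_{-i}) denote the vector obtained from s by replacing block i with the zero vector. Then for every s ∈ ℝ^{Nd}_+, ∑_{i=1}^N [γ(s) − γ(0, s_{-i})] ≤ γ(s) − γ(0). In particular, if γ(0) = 0, the designed game with payoffs π̂_i(s) = γ(s) − γ(0, s_{-i}) satisfies γ(s) ≥ ∑_{i=1}^N π̂_i(s). -/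
namespace DRSubmodularOn

variable {ι : Type*} [DecidableEq ι] {f : (ι → ℝ) → ℝ}

theorem sub_le_sub_of_le [Fintype ι] (hDR : DRSubmodularOn {x : ι → ℝ | 0 ≤ x} f)
    {x y v : ι → ℝ} (hx : 0 ≤ x) (hxy : x ≤ y) (hv : 0 ≤ v) :
    f (y + v) - f y ≤ f (x + v) - f x := by
  have hy : 0 ≤ y := hx.trans hxy
  rw [← Finset.univ_sum_single v]
  induction (Finset.univ : Finset ι) using Finset.induction_on with
  | empty => simp
  | insert a T ha ih =>
    rw [Finset.sum_insert ha, add_comm (Pi.single a (v a) : ι → ℝ), ← add_assoc, ← add_assoc]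
    set w : ι → ℝ := ∑ j ∈ T, Pi.single j (v j)
    have hw : 0 ≤ w := Finset.sum_nonneg fun j _ => Pi.single_nonneg.mpr (hv j)
    have ha' : (0 : ι → ℝ) ≤ Pi.single a (v a) := Pi.single_nonneg.mpr (hv a)
    have hstep := hDR (add_nonneg hx hw) (add_nonneg hy hw) (add_le_add_left hxy w) a (v a) (hv a)
      (add_nonneg (add_nonneg hx hw) ha') (add_nonneg (add_nonneg hy hw) ha')
    linarith

theorem sum_marginal_le [Fintype ι] (hDR : DRSubmodularOn {x : ι → ℝ | 0 ≤ x} f)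
    {κ : Type*} [DecidableEq κ] (S : Finset κ) {v : κ → ι → ℝ} (hv : ∀ i, 0 ≤ v i) :
    ∑ i ∈ S, (f (∑ j ∈ S, v j) - f (∑ j ∈ S, v j - v i)) ≤ f (∑ j ∈ S, v j) - f 0 := by
  induction S using Finset.induction_on with
  | empty => simp
  | insert a T ha ih =>
    set s := ∑ j ∈ T, v j
    have hrest : ∀ i ∈ T, f (v a + s) - f (v a + s - v i) ≤ f s - f (s - v i) := by
      intro i hi
      have hsi : 0 ≤ s - v i := by
        rw [← Finset.sum_erase_eq_sub hi]
        exact Finset.sum_nonneg fun j _ => hv j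
      have := hDR.sub_le_sub_of_le hsi (le_add_of_nonneg_right (hv a)) (hv i)
      rwa [sub_add_cancel, show s - v i + v a + v i = v a + s by abel,
        show s - v i + v a = v a + s - v i by abel] at this
    rw [Finset.sum_insert ha, Finset.sum_insert ha, add_sub_cancel_left]
    have := (Finset.sum_le_sum hrest).trans ih
    linarith

end DRSubmodularOn

theorem sub_upd_zero_apply {N d : ℕ} (s : Fin N × Fin d → ℝ) (i : Fin N) (q : Fin N × Fin d) :
    (s - upd s i 0) q = if q.1 = i then s q else 0 := by
  by_cases h : q.1 = i <;> simp [upd, h]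

theorem sum_marginal_contributions_le_general {N d : ℕ}
    (γ : (Fin N × Fin d → ℝ) → ℝ)
    (hDR : DRSubmodularOn {x : Fin N × Fin d → ℝ | 0 ≤ x} γ) :
    ∀ s : Fin N × Fin d → ℝ, 0 ≤ s →
      ∑ i : Fin N, (γ s - γ (upd s i 0)) ≤ γ s - γ 0 := by
  intro s hs
  have hblock : ∀ i, 0 ≤ s - upd s i 0 := fun i q => by
    rw [sub_upd_zero_apply]
    split_ifs
    exacts [hs q, le_rfl]
  have hsum : ∑ i, (s - upd s i 0) = s := by
    ext q
    simp only [Finset.sum_apply, sub_upd_zero_apply, Finset.sum_ite_eq, Finset.mem_univ, if_true]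
  simpa only [hsum, sub_sub_cancel] using hDR.sum_marginal_le Finset.univ hblock

/-- Fact 1 (key claim): if `γ : ℝ^{Nd}_+ → ℝ` is monotone and DR-submodular, then the sum of
the marginal contributions `γ(s) − γ(0, s₋ᵢ)` over the players is at most `γ(s) − γ(0)`. -/
theorem sum_marginal_contributions_le {N d : ℕ}
    (γ : (Fin N × Fin d → ℝ) → ℝ)
    (hmono : MonotoneOnSet {x : Fin N × Fin d → ℝ | 0 ≤ x} γ)
    (hDR : DRSubmodularOn {x : Fin N × Fin d → ℝ | 0 ≤ x} γ) :
    ∀ s : Fin N × Fin d → ℝ, 0 ≤ s →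
      ∑ i : Fin N, (γ s - γ (upd s i 0)) ≤ γ s - γ 0 :=
  sum_marginal_contributions_le_general γ hDR
end

section
/- (Proposition 1, structural part.) Let T be a finite set of customers, N the number of advertisers, d the number of channels, and p : [N] × [d] × T → [0, 1) activation probabilities. For s ∈ ℝ^{Nd}_+ written in blocks (s_1, …, s_N) with s_i ∈ ℝ^d_+, define the budget-allocation social function γ(s) = ∑_{t ∈ T} ( 1 − ∏_{i=1}^N ∏_{r=1}^d (1 − p(i, r, t))^{[s_i]_r} ), where the exponent is the real power. Then γ is monotone and DR-submodular on ℝ^{Nd}_+. -/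
/-- Proposition 1 (structural part): the budget-allocation social function
`γ(s) = ∑_t (1 − ∏ᵢ ∏ᵣ (1 − p(i,r,t))^{[sᵢ]ᵣ})` is monotone and DR-submodular on
`ℝ^{Nd}_+`. -/
theorem budget_allocation_monotone_drSubmodular {N d : ℕ} (T : Type) [Fintype T]
    (p : Fin N → Fin d → T → ℝ)
    (hp0 : ∀ i r t, 0 ≤ p i r t) (hp1 : ∀ i r t, p i r t < 1) :
    MonotoneOnSet {x : Fin N × Fin d → ℝ | 0 ≤ x}
      (fun s => ∑ t : T, (1 - ∏ i : Fin N, ∏ r : Fin d, (1 - p i r t) ^ s (i, r))) ∧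
    DRSubmodularOn {x : Fin N × Fin d → ℝ | 0 ≤ x}
      (fun s => ∑ t : T, (1 - ∏ i : Fin N, ∏ r : Fin d, (1 - p i r t) ^ s (i, r))) := by
  have ha0 : ∀ (i : Fin N) (r : Fin d) (t : T), (0:ℝ) < 1 - p i r t :=
    fun i r t => by linarith [hp1 i r t]
  have ha1 : ∀ (i : Fin N) (r : Fin d) (t : T), (1:ℝ) - p i r t ≤ 1 :=
    fun i r t => by linarith [hp0 i r t]
  set P : T → (Fin N × Fin d → ℝ) → ℝ :=
    fun t s => ∏ q : Fin N × Fin d, (1 - p q.1 q.2 t) ^ s q with hP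
  have hrw : ∀ s : Fin N × Fin d → ℝ,
      ∑ t : T, (1 - ∏ i : Fin N, ∏ r : Fin d, (1 - p i r t) ^ s (i, r))
        = ∑ t : T, (1 - P t s) := by
    intro s
    refine Finset.sum_congr rfl fun t _ => ?_
    rw [hP]
    simp [Fintype.prod_prod_type]
  have hPpos : ∀ t s, 0 < P t s := fun t s =>
    Finset.prod_pos fun q _ => Real.rpow_pos_of_pos (ha0 q.1 q.2 t) _
  have hPmono : ∀ (t : T) (x y : Fin N × Fin d → ℝ), x ≤ y → P t y ≤ P t x := by
    intro t x y hxy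
    apply Finset.prod_le_prod (fun q _ => (Real.rpow_pos_of_pos (ha0 q.1 q.2 t) _).le)
    intro q _
    exact Real.rpow_le_rpow_of_exponent_ge (ha0 q.1 q.2 t) (ha1 q.1 q.2 t) (hxy q)
  have hPadd : ∀ (t : T) (x : Fin N × Fin d → ℝ) (j : Fin N × Fin d) (k : ℝ),
      P t (x + Pi.single j k) = P t x * (1 - p j.1 j.2 t) ^ k := by
    intro t x j k
    have hx : x + Pi.single j k = Function.update x j (x j + k) := by
      funext q
      by_cases h : q = j
      · subst h; simp
      · simp [Function.update_of_ne h, Pi.single_eq_of_ne h]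
    rw [hx, hP]
    simp only
    rw [← Finset.mul_prod_erase Finset.univ _ (Finset.mem_univ j),
      ← Finset.mul_prod_erase Finset.univ (fun q => (1 - p q.1 q.2 t) ^ x q)
        (Finset.mem_univ j)]
    have hrest : ∏ q ∈ Finset.univ.erase j, (1 - p q.1 q.2 t) ^ Function.update x j (x j + k) q
        = ∏ q ∈ Finset.univ.erase j, (1 - p q.1 q.2 t) ^ x q := by
      refine Finset.prod_congr rfl fun q hq => ?_
      rw [Function.update_of_ne (Finset.ne_of_mem_erase hq)]
    rw [hrest, Function.update_self, Real.rpow_add (ha0 j.1 j.2 t)]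
    ring
  constructor
  · intro x hx y hy hxy
    simp only [hrw]
    refine Finset.sum_le_sum fun t _ => ?_
    have := hPmono t x y hxy
    linarith
  · intro x y hx hy hxy j k hk hx' hy'
    have key : ∀ z : Fin N × Fin d → ℝ,
        (∑ t : T, (1 - P t (z + Pi.single j k))) - ∑ t : T, (1 - P t z)
          = ∑ t : T, P t z * (1 - (1 - p j.1 j.2 t) ^ k) := by
      intro z
      rw [← Finset.sum_sub_distrib]
      refine Finset.sum_congr rfl fun t _ => ?_
      rw [hPadd]
      ring
    simp only [hrw]
    rw [ge_iff_le, key x, key y]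
    refine Finset.sum_le_sum fun t _ => ?_
    have hc : (1 - p j.1 j.2 t) ^ k ≤ 1 :=
      Real.rpow_le_one (ha0 j.1 j.2 t).le (ha1 j.1 j.2 t) hk
    have := hPmono t x y hxy
    nlinarith [hPpos t y]
end

section
/- (Proposition B.3.) Let γ : ℝ^{Nd}_+ → ℝ be weakly DR-submodular, with vectors in ℝ^{Nd}_+ viewed in N blocks of dimension d. Then for all s = (s_1, …, s_N) and s' = (s'_1, …, s'_N) in ℝ^{Nd}_+, ∑_{i=1}^N [γ(s_i + s'_i, s_{-i}) − γ(s)] ≥ γ(s + s') − γ(s); that is, γ has generalized submodularity ratio 1. -/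
/-!
Add the blocks `s'₁, …, s'_N` of `s'` to `s` one after another: `γ (s + s') - γ s` telescopes into
increments `γ (yᵢ + s'ᵢ) - γ yᵢ` with `s ≤ yᵢ` and `yᵢ = s` on block `i`. Each of them is at most
`γ (s + s'ᵢ) - γ s`: adding `s'ᵢ` one coordinate at a time to both `s` and `yᵢ`, weak
DR-submodularity applies at every step, since the two points still agree on the coordinate being
raised.
-/

/-- A function `f` on a subset `X ⊆ ℝ^ι` is weakly DR-submodular if for all `x ≤ y` in `X`,
every coordinate `i` with `x i = y i`, and every `k ≥ 0` keeping both points in `X`,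
`f (x + k eᵢ) − f x ≥ f (y + k eᵢ) − f y`. -/
def WeaklyDRSubmodularOn {ι : Type*} [DecidableEq ι] (X : Set (ι → ℝ))
    (f : (ι → ℝ) → ℝ) : Prop :=
  ∀ ⦃x y : ι → ℝ⦄, x ∈ X → y ∈ X → x ≤ y →
    ∀ i : ι, x i = y i → ∀ k : ℝ, 0 ≤ k →
      x + Pi.single i k ∈ X → y + Pi.single i k ∈ X →
        f (x + Pi.single i k) - f x ≥ f (y + Pi.single i k) - f y

namespace WeaklyDRSubmodularOn

variable {ι : Type*} [DecidableEq ι] {f : (ι → ℝ) → ℝ}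

theorem sub_le_sub_of_support_subset
    (hf : WeaklyDRSubmodularOn {x : ι → ℝ | 0 ≤ x} f) {x y : ι → ℝ} (hx : 0 ≤ x) (hxy : x ≤ y)
    (T : Finset ι) {v : ι → ℝ} (hv : 0 ≤ v) (hvT : Function.support v ⊆ T)
    (hEq : Set.EqOn x y T) :
    f (y + v) - f y ≤ f (x + v) - f x := by
  induction T using Finset.induction_on generalizing v with
  | empty =>
    have hv0 : v = 0 := Function.support_eq_empty_iff.mp (by simpa using hvT)
    simp [hv0]
  | insert a T haT ih =>
    set w := Function.update v a 0
    have hw : 0 ≤ w := fun i => by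
      simp only [w, Pi.zero_apply, Function.update_apply]
      split_ifs
      exacts [le_rfl, hv i]
    have hwT : Function.support w ⊆ T := fun i hi => by
      rcases eq_or_ne i a with rfl | h
      · simp [w] at hi
      · have : i ∈ insert a T := hvT (by simpa [w, h] using hi)
        simpa [h] using this
    have hvw : v = w + Pi.single a (v a) := by
      ext i
      rcases eq_or_ne i a with rfl | h <;> simp [w, *]
    have hstep := hf (x := x + w) (y := y + w) (add_nonneg hx hw)
      (add_nonneg (hx.trans hxy) hw) (add_le_add_left hxy w) a
      (by simp [w, hEq (Finset.mem_insert_self a T)]) (v a) (hv a)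
      (add_nonneg (add_nonneg hx hw) (Pi.single_nonneg.mpr (hv a)))
      (add_nonneg (add_nonneg (hx.trans hxy) hw) (Pi.single_nonneg.mpr (hv a)))
    have hrest := ih hw hwT (hEq.mono (by simp))
    rw [hvw, ← add_assoc, ← add_assoc]
    linarith

theorem sub_le_sum_sub_of_pairwiseDisjoint [Fintype ι]
    (hf : WeaklyDRSubmodularOn {x : ι → ℝ | 0 ≤ x} f) {x : ι → ℝ} (hx : 0 ≤ x)
    {κ : Type*} (I : Finset κ) {v : κ → ι → ℝ} (hv : ∀ j ∈ I, 0 ≤ v j)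
    (hdisj : (I : Set κ).PairwiseDisjoint fun j => Function.support (v j)) :
    f (x + ∑ j ∈ I, v j) - f x ≤ ∑ j ∈ I, (f (x + v j) - f x) := by
  classical
  induction I using Finset.induction_on with
  | empty => simp
  | insert a I haI ih =>
    rw [Finset.coe_insert] at hdisj
    have hvI : ∀ j ∈ I, 0 ≤ v j := fun j hj => hv j (Finset.mem_insert_of_mem hj)
    have hV : 0 ≤ ∑ j ∈ I, v j := Finset.sum_nonneg hvI
    have hVa : Set.EqOn x (x + ∑ j ∈ I, v j) (Function.support (v a)) := fun q hq => by
      have hzero : ∀ j ∈ I, v j q = 0 := fun j hj => Function.notMem_support.mp <|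
        Set.disjoint_left.mp (hdisj (Set.mem_insert a _) (Set.mem_insert_of_mem a hj)
          (ne_of_mem_of_not_mem hj haI).symm) hq
      simp [Finset.sum_apply, Finset.sum_eq_zero hzero]
    have hstep := hf.sub_le_sub_of_support_subset hx (le_add_of_nonneg_right hV)
      (Function.support (v a)).toFinset (hv a (Finset.mem_insert_self a I))
      (by simp) (by simpa using hVa)
    have hrest := ih hvI (hdisj.subset (Set.subset_insert a _))
    rw [Finset.sum_insert haI, Finset.sum_insert haI, add_comm (v a), ← add_assoc]
    linarith

end WeaklyDRSubmodularOn

section Blocks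

variable {N d : ℕ}

def blockPart (s : Fin N × Fin d → ℝ) (i : Fin N) : Fin N × Fin d → ℝ :=
  fun q => if q.1 = i then s q else 0

theorem upd_add_eq_add_blockPart (s s' : Fin N × Fin d → ℝ) (i : Fin N) :
    upd s i (fun r => s (i, r) + s' (i, r)) = s + blockPart s' i := by
  ext ⟨j, r⟩
  by_cases h : j = i
  · subst h; simp [upd, blockPart]
  · simp [upd, blockPart, h]

theorem sum_blockPart (s : Fin N × Fin d → ℝ) : ∑ i, blockPart s i = s := by
  ext q
  simp [blockPart, Finset.sum_apply]

theorem blockPart_nonneg {s : Fin N × Fin d → ℝ} (hs : 0 ≤ s) (i : Fin N) :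
    0 ≤ blockPart s i := fun q => by
  unfold blockPart
  split_ifs
  exacts [hs q, le_rfl]

theorem pairwiseDisjoint_support_blockPart (s : Fin N × Fin d → ℝ) (I : Set (Fin N)) :
    I.PairwiseDisjoint fun i => Function.support (blockPart s i) :=
  fun i _ j _ hij => Set.disjoint_left.mpr fun q hqi hqj => by
    simp only [blockPart, Function.mem_support, ne_eq, ite_eq_right_iff, not_forall] at hqi hqj
    exact hij (hqi.1.symm.trans hqj.1)

end Blocks

/-- Proposition B.3: if the social function `γ : ℝ^{Nd}_+ → ℝ` is weakly DR-submodular, then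
it has generalized submodularity ratio `1`:
`∑ᵢ (γ(sᵢ + s'ᵢ, s₋ᵢ) − γ(s)) ≥ γ(s + s') − γ(s)` for all `s, s' ≥ 0`. -/
theorem weaklyDR_implies_generalized_ratio_one {N d : ℕ}
    (γ : (Fin N × Fin d → ℝ) → ℝ)
    (hweak : WeaklyDRSubmodularOn {x : Fin N × Fin d → ℝ | 0 ≤ x} γ) :
    ∀ s s' : Fin N × Fin d → ℝ, 0 ≤ s → 0 ≤ s' →
      ∑ i : Fin N, (γ (upd s i (fun r => s (i, r) + s' (i, r))) - γ s) ≥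
        γ (s + s') - γ s := by
  intro s s' hs hs'
  simp only [upd_add_eq_add_blockPart]
  conv_rhs => rw [← sum_blockPart s']
  exact hweak.sub_le_sum_sub_of_pairwiseDisjoint hs Finset.univ
    (fun i _ => blockPart_nonneg hs' i) (pairwiseDisjoint_support_blockPart s' _)
end
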